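/- Let m ≥ 2 and let u ≠ v be indices in {1,…,m}. Then u and v are strongly cospectral with respect to L if and only if either (a) u and v are strongly cospectral with respect to L_X and m ∉ σ_{uv}^−(L_X), or (b) m = 2 and L_X = 0 (i.e., X = O₂). -/

import Mathlib

open Matrix Complex

/-- Transition matrix `exp(itM)` of the continuous quantum walk whose Hamiltonian is the
real symmetric matrix `M` (the matrix exponential is taken over `ℂ`). -/
noncomputable def transU {N : Type*} [Fintype N] [DecidableEq N]
    (M : Matrix N N ℝ) (t : ℝ) : Matrix N N ℂ :=
  NormedSpace.exp ((Complex.I * (t : ℂ)) • M.map (fun x : ℝ => (x : ℂ)))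

/-- Laplacian matrix of the join `X ∨ Y` of two weighted graphs with Laplacian
matrices `LX` and `LY`. -/
noncomputable def joinL (m n : ℕ) (LX : Matrix (Fin m) (Fin m) ℝ)
    (LY : Matrix (Fin n) (Fin n) ℝ) :
    Matrix (Fin m ⊕ Fin n) (Fin m ⊕ Fin n) ℝ :=
  Matrix.fromBlocks (LX + (n : ℝ) • (1 : Matrix (Fin m) (Fin m) ℝ))
    (-(Matrix.of fun _ _ => (1 : ℝ)))
    (-(Matrix.of fun _ _ => (1 : ℝ)))
    (LY + (m : ℝ) • (1 : Matrix (Fin n) (Fin n) ℝ))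

/-- Adjacency matrix of the join `X ∨ Y` of two weighted graphs with adjacency
matrices `AX` and `AY`. -/
noncomputable def joinA (m n : ℕ) (AX : Matrix (Fin m) (Fin m) ℝ)
    (AY : Matrix (Fin n) (Fin n) ℝ) :
    Matrix (Fin m ⊕ Fin n) (Fin m ⊕ Fin n) ℝ :=
  Matrix.fromBlocks AX (Matrix.of fun _ _ => (1 : ℝ))
    (Matrix.of fun _ _ => (1 : ℝ)) AY

/-- `lam` is an eigenvalue of the matrix `M`. -/
def IsEigenvalue {N : Type*} [Fintype N] (M : Matrix N N ℝ) (lam : ℝ) : Prop :=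
  ∃ w : N → ℝ, w ≠ 0 ∧ M.mulVec w = lam • w

/-- The eigenvalue support `σ_u(M)` of the vertex `u`: all eigenvalues `lam` of `M` having
an eigenvector `w` with `w u ≠ 0`. -/
def eigSupport {N : Type*} [Fintype N] (M : Matrix N N ℝ) (u : N) : Set ℝ :=
  {lam | ∃ w : N → ℝ, w ≠ 0 ∧ M.mulVec w = lam • w ∧ w u ≠ 0}

/-- Vertices `u` and `v` are strongly cospectral with respect to `M`: for each eigenvalue,
either all eigenvectors have equal `u`,`v` entries, or all have opposite `u`,`v` entries. -/
def StronglyCospectral {N : Type*} [Fintype N] (M : Matrix N N ℝ) (u v : N) : Prop :=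
  ∀ lam : ℝ, IsEigenvalue M lam →
    (∀ w : N → ℝ, M.mulVec w = lam • w → w u = w v) ∨
    (∀ w : N → ℝ, M.mulVec w = lam • w → w u = -(w v))

/-- `σ_{uv}^-(M)`: eigenvalues in the support of `u` all of whose eigenvectors `w`
satisfy `w u = - w v`. -/
def sigmaMinus {N : Type*} [Fintype N] (M : Matrix N N ℝ) (u v : N) : Set ℝ :=
  {lam | lam ∈ eigSupport M u ∧ ∀ w : N → ℝ, M.mulVec w = lam • w → w u = -(w v)}

/-- The vertex `u` is periodic with respect to `M`. -/
noncomputable def PeriodicAt {N : Type*} [Fintype N] [DecidableEq N]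
    (M : Matrix N N ℝ) (u : N) : Prop :=
  ∃ τ : ℝ, 0 < τ ∧ ‖transU M τ u u‖ = 1

/-- Perfect state transfer occurs between vertices `u` and `v` with respect to `M`. -/
noncomputable def HasPST {N : Type*} [Fintype N] [DecidableEq N]
    (M : Matrix N N ℝ) (u v : N) : Prop :=
  ∃ τ : ℝ, 0 < τ ∧ ‖transU M τ u v‖ = 1

/-
Let `w` be an eigenvector of the join for `μ ≠ n`. Its `X`-part is an `L_X`-eigenvector for
`μ - n` plus a constant, and for `μ ∉ {0, m + n}` the constant vanishes, because `w` is orthogonal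
to `1` and to `(n·1, -m·1)`. So the sign relating `w u` and `w v` in the join is the sign in `L_X`
at `μ - n`, except at `μ = 0` (`L_X` is positive semidefinite, so `-n` is no eigenvalue) and at
`μ = m + n`, where `(n·1, -m·1)` forces the sign `+`; this is compatible with `L_X` exactly when
`m ∉ σ⁻_{uv}(L_X)`.

If a kernel vector `x₀` of `L_X` separates `u` and `v`, then `(x₀ - mean, 0)` is an eigenvector of
the join for `n` separating them, so the sign at `n` is `-`. As `x₀` is constant on the components
of `X`, multiplying an `L_X`-eigenvector by `x₀ - x₀ v` gives an `L_X`-eigenvector vanishing at `v`;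
hence every `L_X`-eigenvector for a nonzero eigenvalue vanishes at `u`, the column of `u` in `L_X`
is zero, and the sign `-` at `n` applied to the kernel vector `m e_u - 1` gives `m - 1 = 1`.
-/

theorem Fin.sum_univ_two_of_ne {u v : Fin 2} (huv : u ≠ v) (f : Fin 2 → ℝ) :
    ∑ i, f i = f u + f v := by
  fin_cases u <;> fin_cases v <;> simp_all [Fin.sum_univ_two, add_comm]

namespace Matrix

variable {N : Type*} {M : Matrix N N ℝ}

theorem neg_mul_sub_sq_nonneg (ho : ∀ i j, i ≠ j → M i j ≤ 0) (x : N → ℝ) (i j : N) :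
    0 ≤ -M i j * (x i - x j) ^ 2 := by
  rcases eq_or_ne i j with rfl | hij
  · simp
  · exact mul_nonneg (neg_nonneg.2 (ho i j hij)) (sq_nonneg _)

variable [Fintype N]

theorem mulVec_const_eq_zero (hr : ∀ i, ∑ j, M i j = 0) (c : ℝ) : M *ᵥ (fun _ => c) = 0 := by
  ext i
  simp [mulVec, dotProduct, ← Finset.sum_mul, hr i]

theorem sum_mulVec_eq_zero (hs : M.IsSymm) (hr : ∀ i, ∑ j, M i j = 0) (x : N → ℝ) :
    ∑ i, (M *ᵥ x) i = 0 := by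
  simp only [mulVec, dotProduct]
  rw [Finset.sum_comm]
  refine Finset.sum_eq_zero fun j _ => ?_
  simp [← Finset.sum_mul, fun i => hs.apply j i, hr j]

theorem sum_eq_zero_of_mulVec_eq_smul (hs : M.IsSymm) (hr : ∀ i, ∑ j, M i j = 0) {lam : ℝ}
    {x : N → ℝ} (hlam : lam ≠ 0) (hx : M *ᵥ x = lam • x) : ∑ i, x i = 0 := by
  have h := sum_mulVec_eq_zero hs hr x
  simp only [hx, Pi.smul_apply, smul_eq_mul, ← Finset.mul_sum] at h
  exact (mul_eq_zero.mp h).resolve_left hlam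

theorem sum_sum_neg_mul_sub_sq (hs : M.IsSymm) (hr : ∀ i, ∑ j, M i j = 0) (x : N → ℝ) :
    ∑ i, ∑ j, -M i j * (x i - x j) ^ 2 = 2 * (x ⬝ᵥ M *ᵥ x) := by
  have hrow : ∑ i, ∑ j, M i j * x i ^ 2 = 0 :=
    Finset.sum_eq_zero fun i _ => by rw [← Finset.sum_mul, hr i, zero_mul]
  have hcol : ∑ i, ∑ j, M i j * x j ^ 2 = 0 := by
    rw [Finset.sum_comm]
    exact Finset.sum_eq_zero fun j _ => by simp [← Finset.sum_mul, fun i => hs.apply j i, hr j]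
  have hexp : ∀ i j, -M i j * (x i - x j) ^ 2
      = 2 * (x i * (M i j * x j)) - M i j * x i ^ 2 - M i j * x j ^ 2 := fun i j => by ring
  simp only [hexp, Finset.sum_sub_distrib, hrow, hcol, ← Finset.mul_sum, dotProduct, mulVec]
  ring

theorem dotProduct_mulVec_self_nonneg (hs : M.IsSymm) (hr : ∀ i, ∑ j, M i j = 0)
    (ho : ∀ i j, i ≠ j → M i j ≤ 0) (x : N → ℝ) : 0 ≤ x ⬝ᵥ M *ᵥ x := by
  have := sum_sum_neg_mul_sub_sq hs hr x
  have : 0 ≤ ∑ i, ∑ j, -M i j * (x i - x j) ^ 2 :=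
    Finset.sum_nonneg fun i _ => Finset.sum_nonneg fun j _ => neg_mul_sub_sq_nonneg ho x i j
  linarith

theorem eq_zero_of_mulVec_eq_smul_of_neg (hs : M.IsSymm) (hr : ∀ i, ∑ j, M i j = 0)
    (ho : ∀ i j, i ≠ j → M i j ≤ 0) {lam : ℝ} {x : N → ℝ} (hlam : lam < 0)
    (hx : M *ᵥ x = lam • x) : x = 0 := by
  have h := dotProduct_mulVec_self_nonneg hs hr ho x
  rw [hx, dotProduct_smul, smul_eq_mul] at h
  have hxx : x ⬝ᵥ x ≤ 0 := nonpos_of_mul_nonneg_right h hlam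
  exact dotProduct_self_eq_zero.1
    (le_antisymm hxx (Fintype.sum_nonneg fun i => mul_self_nonneg (x i)))

theorem apply_eq_of_mulVec_eq_zero (hs : M.IsSymm) (hr : ∀ i, ∑ j, M i j = 0)
    (ho : ∀ i j, i ≠ j → M i j ≤ 0) {z : N → ℝ} (hz : M *ᵥ z = 0) {i j : N}
    (hij : M i j ≠ 0) : z i = z j := by
  have hsum : ∑ i, ∑ j, -M i j * (z i - z j) ^ 2 = 0 := by
    rw [sum_sum_neg_mul_sub_sq hs hr z, hz, dotProduct_zero, mul_zero]
  have hrow := congrFun ((Fintype.sum_eq_zero_iff_of_nonneg fun i =>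
    Fintype.sum_nonneg fun j => neg_mul_sub_sq_nonneg ho z i j).1 hsum) i
  have hterm := congrFun ((Fintype.sum_eq_zero_iff_of_nonneg fun j =>
    neg_mul_sub_sq_nonneg ho z i j).1 hrow) j
  have hsq : (z i - z j) ^ 2 = 0 := (mul_eq_zero.1 hterm).resolve_left (neg_ne_zero.2 hij)
  exact sub_eq_zero.1 (pow_eq_zero_iff two_ne_zero |>.1 hsq)

theorem mulVec_mul_of_mulVec_eq_zero (hs : M.IsSymm) (hr : ∀ i, ∑ j, M i j = 0)
    (ho : ∀ i j, i ≠ j → M i j ≤ 0) {z : N → ℝ} (hz : M *ᵥ z = 0) (y : N → ℝ) :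
    M *ᵥ (z * y) = z * M *ᵥ y := by
  ext i
  simp only [mulVec, dotProduct, Pi.mul_apply, Finset.mul_sum]
  refine Finset.sum_congr rfl fun j _ => ?_
  by_cases hij : M i j = 0
  · simp [hij]
  · rw [apply_eq_of_mulVec_eq_zero hs hr ho hz hij]
    ring

theorem mulVec_single_one_eq_zero_of_forall_eigenvector [DecidableEq N] (hM : M.IsHermitian)
    (u : N) (h : ∀ (lam : ℝ) (y : N → ℝ), lam ≠ 0 → M *ᵥ y = lam • y → y u = 0) :
    M *ᵥ Pi.single u 1 = 0 := by
  set b := hM.eigenvectorBasis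
  have hexp : (Pi.single u 1 : N → ℝ) = ∑ i, b i u • ⇑(b i) := by
    have := congrArg WithLp.ofLp (b.sum_repr' (EuclideanSpace.single u 1))
    simpa [EuclideanSpace.inner_single_right] using this.symm
  rw [hexp, mulVec_sum]
  refine Finset.sum_eq_zero fun i _ => ?_
  rw [mulVec_smul, hM.mulVec_eigenvectorBasis, smul_smul]
  by_cases hi : hM.eigenvalues i = 0
  · simp [hi]
  · rw [h _ _ hi (hM.mulVec_eigenvectorBasis i), zero_mul, zero_smul]

end Matrix

namespace StronglyCospectral

variable {N : Type*} [Fintype N] {M : Matrix N N ℝ} {u v : N}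

theorem forall_or (h : StronglyCospectral M u v) (lam : ℝ) :
    (∀ w : N → ℝ, M *ᵥ w = lam • w → w u = w v) ∨
      (∀ w : N → ℝ, M *ᵥ w = lam • w → w u = -(w v)) := by
  by_cases hlam : IsEigenvalue M lam
  · exact h lam hlam
  · left
    intro w hw
    obtain rfl : w = 0 := by_contra fun hw0 => hlam ⟨w, hw0, hw⟩
    rfl

theorem forall_eq_neg_of_ne (h : StronglyCospectral M u v) {lam : ℝ} {w : N → ℝ}
    (hw : M *ᵥ w = lam • w) (hne : w u ≠ w v) :
    ∀ w' : N → ℝ, M *ᵥ w' = lam • w' → w' u = -(w' v) :=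
  (h.forall_or lam).resolve_left fun H => hne (H w hw)

theorem apply_eq_of_notMem_sigmaMinus (h : StronglyCospectral M u v) {lam : ℝ}
    (hlam : lam ∉ sigmaMinus M u v) {w : N → ℝ} (hw : M *ᵥ w = lam • w) : w u = w v := by
  rcases h.forall_or lam with H | H
  · exact H w hw
  · have hwu : w u = 0 := by
      by_contra hwu
      exact hlam ⟨⟨w, fun h0 => hwu (by simp [h0]), hw, hwu⟩, H⟩
    linarith [H w hw]

end StronglyCospectral

section Join

variable {m n : ℕ} {LX : Matrix (Fin m) (Fin m) ℝ} {LY : Matrix (Fin n) (Fin n) ℝ}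

theorem joinL_mulVec_inl (w : Fin m ⊕ Fin n → ℝ) (i : Fin m) :
    (joinL m n LX LY *ᵥ w) (Sum.inl i) =
      (LX *ᵥ (w ∘ Sum.inl)) i + n * w (Sum.inl i) - ∑ j, w (Sum.inr j) := by
  simp only [joinL, fromBlocks_mulVec, Sum.elim_inl, Pi.add_apply, add_mulVec,
    smul_mulVec, one_mulVec, neg_mulVec, Pi.neg_apply, Pi.smul_apply, smul_eq_mul]
  simp only [mulVec, dotProduct, of_apply, one_mul, Function.comp_apply]
  ring

theorem joinL_mulVec_inr (w : Fin m ⊕ Fin n → ℝ) (j : Fin n) :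
    (joinL m n LX LY *ᵥ w) (Sum.inr j) =
      (LY *ᵥ (w ∘ Sum.inr)) j + m * w (Sum.inr j) - ∑ i, w (Sum.inl i) := by
  simp only [joinL, fromBlocks_mulVec, Sum.elim_inr, Pi.add_apply, add_mulVec,
    smul_mulVec, one_mulVec, neg_mulVec, Pi.neg_apply, Pi.smul_apply, smul_eq_mul]
  simp only [mulVec, dotProduct, of_apply, one_mul, Function.comp_apply]
  ring

theorem joinL_mulVec_sumElim_zero {lam : ℝ} {x : Fin m → ℝ} (hx : LX *ᵥ x = lam • x)
    (hsum : ∑ i, x i = 0) :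
    joinL m n LX LY *ᵥ Sum.elim x 0 = (lam + n) • Sum.elim x 0 := by
  ext (i | j)
  · simp only [joinL_mulVec_inl, Sum.elim_comp_inl, hx, Pi.smul_apply, smul_eq_mul, Sum.elim_inl,
      Sum.elim_inr, Pi.zero_apply, Finset.sum_const_zero, sub_zero]
    ring
  · simp [joinL_mulVec_inr, hsum]

theorem joinL_mulVec_sumElim_const (hXr : ∀ i, ∑ j, LX i j = 0) (hYr : ∀ i, ∑ j, LY i j = 0) :
    joinL m n LX LY *ᵥ Sum.elim (fun _ => (n : ℝ)) (fun _ => -(m : ℝ)) =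
      ((m : ℝ) + n) • Sum.elim (fun _ => (n : ℝ)) (fun _ => -(m : ℝ)) := by
  ext (i | j)
  · simp only [joinL_mulVec_inl, Sum.elim_comp_inl, mulVec_const_eq_zero hXr, Pi.zero_apply,
      Sum.elim_inl, Sum.elim_inr, Finset.sum_const, Finset.card_univ, Fintype.card_fin,
      nsmul_eq_mul, Pi.smul_apply, smul_eq_mul]
    ring
  · simp only [joinL_mulVec_inr, Sum.elim_comp_inr, mulVec_const_eq_zero hYr, Pi.zero_apply,
      Sum.elim_inr, Sum.elim_inl, Finset.sum_const, Finset.card_univ, Fintype.card_fin,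
      nsmul_eq_mul, Pi.smul_apply, smul_eq_mul]
    ring

theorem sum_joinL_mulVec_inl (hXs : LX.IsSymm) (hXr : ∀ i, ∑ j, LX i j = 0)
    (w : Fin m ⊕ Fin n → ℝ) :
    ∑ i, (joinL m n LX LY *ᵥ w) (Sum.inl i) =
      n * ∑ i, w (Sum.inl i) - m * ∑ j, w (Sum.inr j) := by
  simp [joinL_mulVec_inl, Finset.sum_sub_distrib, Finset.sum_add_distrib,
    sum_mulVec_eq_zero hXs hXr, Finset.mul_sum]

theorem sum_joinL_mulVec_inr (hYs : LY.IsSymm) (hYr : ∀ i, ∑ j, LY i j = 0)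
    (w : Fin m ⊕ Fin n → ℝ) :
    ∑ j, (joinL m n LX LY *ᵥ w) (Sum.inr j) =
      m * ∑ j, w (Sum.inr j) - n * ∑ i, w (Sum.inl i) := by
  simp [joinL_mulVec_inr, Finset.sum_sub_distrib, Finset.sum_add_distrib,
    sum_mulVec_eq_zero hYs hYr, Finset.mul_sum]

theorem joinL_eigenvector_comp_inl (hXs : LX.IsSymm) (hXr : ∀ i, ∑ j, LX i j = 0)
    (hYs : LY.IsSymm) (hYr : ∀ i, ∑ j, LY i j = 0) {μ : ℝ} {w : Fin m ⊕ Fin n → ℝ}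
    (hw : joinL m n LX LY *ᵥ w = μ • w) (h0 : μ ≠ 0) (htop : μ ≠ m + n) :
    ∑ i, w (Sum.inl i) = 0 ∧ LX *ᵥ (w ∘ Sum.inl) = (μ - n) • (w ∘ Sum.inl) := by
  have hX := sum_joinL_mulVec_inl (LY := LY) hXs hXr w
  have hY := sum_joinL_mulVec_inr (LX := LX) hYs hYr w
  simp only [hw, Pi.smul_apply, smul_eq_mul, ← Finset.mul_sum] at hX hY
  have hμ : μ * (μ - (m + n)) ≠ 0 := mul_ne_zero h0 (sub_ne_zero.2 htop)
  have hsX : ∑ i, w (Sum.inl i) = 0 :=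
    (mul_eq_zero.1 (by linear_combination (μ - m) * hX - m * hY)).resolve_left hμ
  have hsY : ∑ j, w (Sum.inr j) = 0 :=
    (mul_eq_zero.1 (by linear_combination (μ - n) * hY - n * hX)).resolve_left hμ
  refine ⟨hsX, funext fun i => ?_⟩
  have hi := congrFun hw (Sum.inl i)
  rw [joinL_mulVec_inl, hsY] at hi
  simp only [Pi.smul_apply, smul_eq_mul, Function.comp_apply] at hi ⊢
  linarith

theorem joinL_exists_eigenvector_comp_inl_sub_const (hXr : ∀ i, ∑ j, LX i j = 0) {μ : ℝ}
    {w : Fin m ⊕ Fin n → ℝ} (hw : joinL m n LX LY *ᵥ w = μ • w) (hμ : μ ≠ n) :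
    ∃ c : ℝ, LX *ᵥ (w ∘ Sum.inl - fun _ => c) = (μ - n) • (w ∘ Sum.inl - fun _ => c) := by
  refine ⟨(∑ j, w (Sum.inr j)) / (n - μ), funext fun i => ?_⟩
  have hi := congrFun hw (Sum.inl i)
  rw [joinL_mulVec_inl] at hi
  have hnμ : (n : ℝ) - μ ≠ 0 := sub_ne_zero.2 (Ne.symm hμ)
  rw [mulVec_sub, mulVec_const_eq_zero hXr, sub_zero]
  simp only [Pi.smul_apply, smul_eq_mul, Pi.sub_apply, Function.comp_apply] at hi ⊢
  field_simp
  linear_combination (n - μ) * hi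

theorem stronglyCospectral_joinL_zero_inl (hn : n ≠ 0) (hYs : LY.IsSymm)
    (hYr : ∀ i, ∑ j, LY i j = 0) {u v : Fin 2} (huv : u ≠ v) :
    StronglyCospectral (joinL 2 n 0 LY) (Sum.inl u) (Sum.inl v) := by
  intro μ _
  by_cases hμ : μ = n
  · refine Or.inr fun w hw => ?_
    subst hμ
    have h := (joinL_eigenvector_comp_inl isSymm_zero (fun _ => by simp) hYs hYr hw
      (by exact_mod_cast hn) (by simp)).1
    rw [Fin.sum_univ_two_of_ne huv] at h
    linarith
  · refine Or.inl fun w hw => ?_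
    obtain ⟨c, hc⟩ := joinL_exists_eigenvector_comp_inl_sub_const (fun _ => by simp) hw hμ
    rw [zero_mulVec, eq_comm, smul_eq_zero] at hc
    have hw' := hc.resolve_left (sub_ne_zero.2 hμ)
    have hu := congrFun hw' u
    have hv := congrFun hw' v
    simp only [Pi.sub_apply, Function.comp_apply, Pi.zero_apply] at hu hv
    linarith

variable {u v : Fin m}

theorem StronglyCospectral.of_joinL (hXs : LX.IsSymm) (hXr : ∀ i, ∑ j, LX i j = 0)
    (hL : StronglyCospectral (joinL m n LX LY) (Sum.inl u) (Sum.inl v))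
    (hker : ∀ x, LX *ᵥ x = 0 → x u = x v) : StronglyCospectral LX u v := by
  intro lam _
  rcases eq_or_ne lam 0 with rfl | hlam
  · exact Or.inl fun x hx => hker x (by rw [hx, zero_smul])
  have hext : ∀ x, LX *ᵥ x = lam • x →
      joinL m n LX LY *ᵥ Sum.elim x 0 = (lam + n) • Sum.elim x 0 :=
    fun x hx => joinL_mulVec_sumElim_zero hx (sum_eq_zero_of_mulVec_eq_smul hXs hXr hlam hx)
  refine or_iff_not_imp_left.2 fun hplus => ?_
  push Not at hplus
  obtain ⟨x, hx, hne⟩ := hplus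
  intro y hy
  simpa using hL.forall_eq_neg_of_ne (hext x hx) (by simpa using hne) _ (hext y hy)

theorem notMem_sigmaMinus_of_joinL (hn : n ≠ 0) (hXs : LX.IsSymm)
    (hXr : ∀ i, ∑ j, LX i j = 0) (hYr : ∀ i, ∑ j, LY i j = 0)
    (hL : StronglyCospectral (joinL m n LX LY) (Sum.inl u) (Sum.inl v)) :
    (m : ℝ) ∉ sigmaMinus LX u v := by
  rintro ⟨⟨x, -, hx, hxu⟩, hminus⟩
  have hxv := hminus x hx
  have hm : (m : ℝ) ≠ 0 := Nat.cast_ne_zero.2 u.pos.ne'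
  have hext := joinL_mulVec_sumElim_zero (LY := LY) hx
    (sum_eq_zero_of_mulVec_eq_smul hXs hXr hm hx)
  have h := hL.forall_eq_neg_of_ne hext
    (by simp only [Sum.elim_inl]; exact fun h => hxu (by linarith))
    _ (joinL_mulVec_sumElim_const hXr hYr)
  simp only [Sum.elim_inl, Nat.cast_eq_neg_cast, and_self] at h
  exact hn h

theorem apply_eq_neg_of_joinL (hXr : ∀ i, ∑ j, LX i j = 0)
    (hL : StronglyCospectral (joinL m n LX LY) (Sum.inl u) (Sum.inl v)) {x₀ : Fin m → ℝ}
    (hx₀ : LX *ᵥ x₀ = 0) (hne : x₀ u ≠ x₀ v) {z : Fin m → ℝ} (hz : LX *ᵥ z = 0) :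
    m * z u - ∑ i, z i = -(m * z v - ∑ i, z i) := by
  have hm : (m : ℝ) ≠ 0 := Nat.cast_ne_zero.2 u.pos.ne'
  have hcenter : ∀ z, LX *ᵥ z = 0 →
      joinL m n LX LY *ᵥ Sum.elim (fun i => m * z i - ∑ j, z j) 0 =
        (n : ℝ) • Sum.elim (fun i => m * z i - ∑ j, z j) 0 := by
    intro z hz
    have hker : LX *ᵥ (fun i => m * z i - ∑ j, z j) = (0 : ℝ) • fun i => m * z i - ∑ j, z j := by
      rw [show (fun i => m * z i - ∑ j, z j) = (m : ℝ) • z - fun _ => ∑ j, z j from rfl,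
        mulVec_sub, mulVec_smul, hz, mulVec_const_eq_zero hXr, zero_smul, smul_zero, sub_zero]
    simpa using joinL_mulVec_sumElim_zero hker (by simp [Finset.sum_sub_distrib, Finset.mul_sum])
  simpa using hL.forall_eq_neg_of_ne (hcenter x₀ hx₀) (by simpa [hm] using hne) _ (hcenter z hz)

theorem apply_eq_zero_of_joinL (hXs : LX.IsSymm) (hXr : ∀ i, ∑ j, LX i j = 0)
    (hXo : ∀ i j, i ≠ j → LX i j ≤ 0)
    (hL : StronglyCospectral (joinL m n LX LY) (Sum.inl u) (Sum.inl v)) {x₀ : Fin m → ℝ}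
    (hx₀ : LX *ᵥ x₀ = 0) (hne : x₀ u ≠ x₀ v) {lam : ℝ} (hlam : lam ≠ 0) {y : Fin m → ℝ}
    (hy : LX *ᵥ y = lam • y) : y u = 0 := by
  set z : Fin m → ℝ := x₀ - fun _ => x₀ v
  have hz : LX *ᵥ z = 0 := by rw [mulVec_sub, hx₀, mulVec_const_eq_zero hXr, sub_zero]
  have hzy : LX *ᵥ (z * y) = lam • (z * y) := by
    rw [mulVec_mul_of_mulVec_eq_zero hXs hXr hXo hz, hy, mul_smul_comm]
  have hext := joinL_mulVec_sumElim_zero (LY := LY) hzy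
    (sum_eq_zero_of_mulVec_eq_smul hXs hXr hlam hzy)
  have hzyu : (z * y) u = 0 := by
    rcases hL.forall_or (lam + n) with H | H <;> simpa [z] using H _ hext
  simpa [z, sub_ne_zero.2 hne] using hzyu

theorem eq_two_and_eq_zero_of_joinL (hXs : LX.IsSymm) (hXr : ∀ i, ∑ j, LX i j = 0)
    (hXo : ∀ i j, i ≠ j → LX i j ≤ 0) (huv : u ≠ v)
    (hL : StronglyCospectral (joinL m n LX LY) (Sum.inl u) (Sum.inl v)) {x₀ : Fin m → ℝ}
    (hx₀ : LX *ᵥ x₀ = 0) (hne : x₀ u ≠ x₀ v) : m = 2 ∧ LX = 0 := by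
  have hcol : LX *ᵥ Pi.single u 1 = 0 :=
    mulVec_single_one_eq_zero_of_forall_eigenvector (isHermitian_iff_isSymm.2 hXs) u
      fun _ _ hlam hy => apply_eq_zero_of_joinL hXs hXr hXo hL hx₀ hne hlam hy
  have hm : (m : ℝ) = 2 := by
    have h := apply_eq_neg_of_joinL hXr hL hx₀ hne hcol
    simp only [Pi.single_eq_same, Pi.single_eq_of_ne huv.symm, Finset.sum_pi_single',
      Finset.mem_univ, if_true, mul_one, mul_zero, zero_sub, neg_neg] at h
    linarith
  obtain rfl : m = 2 := by exact_mod_cast hm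
  have hcu : ∀ i, LX i u = 0 := fun i => by simpa using congrFun hcol i
  have hcv : ∀ i, LX i v = 0 := fun i => by
    linarith [hcu i, (Fin.sum_univ_two_of_ne huv (LX i)).symm.trans (hXr i)]
  refine ⟨rfl, ext fun i j => ?_⟩
  obtain rfl | rfl : j = u ∨ j = v := by omega
  exacts [hcu i, hcv i]

theorem stronglyCospectral_joinL_inl (hn : n ≠ 0) (hXs : LX.IsSymm)
    (hXr : ∀ i, ∑ j, LX i j = 0) (hXo : ∀ i j, i ≠ j → LX i j ≤ 0) (hYs : LY.IsSymm)
    (hYr : ∀ i, ∑ j, LY i j = 0) (hX : StronglyCospectral LX u v)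
    (hσ : (m : ℝ) ∉ sigmaMinus LX u v) :
    StronglyCospectral (joinL m n LX LY) (Sum.inl u) (Sum.inl v) := by
  intro μ _
  by_cases hμ : μ = 0 ∨ μ = m + n
  · refine Or.inl fun w hw => ?_
    have hμn : μ ≠ n := by
      rcases hμ with rfl | rfl
      · exact_mod_cast hn.symm
      · simpa using u.pos.ne'
    obtain ⟨c, hc⟩ := joinL_exists_eigenvector_comp_inl_sub_const hXr hw hμn
    suffices h : ∀ x, LX *ᵥ x = (μ - n) • x → x u = x v by simpa using h _ hc
    intro x hx
    rcases hμ with rfl | rfl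
    · have hneg : (0 : ℝ) - n < 0 := by simpa using Nat.pos_of_ne_zero hn
      rw [eq_zero_of_mulVec_eq_smul_of_neg hXs hXr hXo hneg hx]
      rfl
    · exact hX.apply_eq_of_notMem_sigmaMinus hσ (by simpa using hx)
  · push Not at hμ
    have hX' : ∀ w, joinL m n LX LY *ᵥ w = μ • w →
        LX *ᵥ (w ∘ Sum.inl) = (μ - n) • (w ∘ Sum.inl) :=
      fun w hw => (joinL_eigenvector_comp_inl hXs hXr hYs hYr hw hμ.1 hμ.2).2
    exact (hX.forall_or (μ - n)).imp (fun H w hw => H _ (hX' w hw))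
      fun H w hw => H _ (hX' w hw)

end Join

theorem stmt10_general (m n : ℕ) (hn : 1 ≤ n)
    (LX : Matrix (Fin m) (Fin m) ℝ) (LY : Matrix (Fin n) (Fin n) ℝ)
    (hLXsymm : LX.IsSymm) (hLXrow : ∀ i, ∑ j, LX i j = 0)
    (hLXoffdiag : ∀ i j, i ≠ j → LX i j ≤ 0)
    (hLYsymm : LY.IsSymm) (hLYrow : ∀ i, ∑ j, LY i j = 0)
    (u v : Fin m) (huv : u ≠ v) :
    StronglyCospectral (joinL m n LX LY) (Sum.inl u) (Sum.inl v) ↔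
      ((StronglyCospectral LX u v ∧ (m : ℝ) ∉ sigmaMinus LX u v) ∨ (m = 2 ∧ LX = 0)) := by
  have hn₀ : n ≠ 0 := by omega
  constructor
  · intro hL
    by_cases hker : ∃ x, LX *ᵥ x = 0 ∧ x u ≠ x v
    · obtain ⟨x₀, hx₀, hne⟩ := hker
      exact Or.inr (eq_two_and_eq_zero_of_joinL hLXsymm hLXrow hLXoffdiag huv hL hx₀ hne)
    · push Not at hker
      exact Or.inl ⟨hL.of_joinL hLXsymm hLXrow hker,
        notMem_sigmaMinus_of_joinL hn₀ hLXsymm hLXrow hLYrow hL⟩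
  · rintro (⟨hX, hσ⟩ | ⟨rfl, rfl⟩)
    · exact stronglyCospectral_joinL_inl hn₀ hLXsymm hLXrow hLXoffdiag hLYsymm hLYrow hX hσ
    · exact stronglyCospectral_joinL_zero_inl hn₀ hLYsymm hLYrow huv

theorem stmt10 (m n : ℕ) (hm : 2 ≤ m) (hn : 1 ≤ n)
    (LX : Matrix (Fin m) (Fin m) ℝ) (LY : Matrix (Fin n) (Fin n) ℝ)
    (hLXsymm : LX.IsSymm) (hLXrow : ∀ i, ∑ j, LX i j = 0)
    (hLXoffdiag : ∀ i j, i ≠ j → LX i j ≤ 0)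
    (hLYsymm : LY.IsSymm) (hLYrow : ∀ i, ∑ j, LY i j = 0)
    (hLYoffdiag : ∀ i j, i ≠ j → LY i j ≤ 0)
    (u v : Fin m) (huv : u ≠ v) :
    StronglyCospectral (joinL m n LX LY) (Sum.inl u) (Sum.inl v) ↔
      ((StronglyCospectral LX u v ∧ (m : ℝ) ∉ sigmaMinus LX u v) ∨ (m = 2 ∧ LX = 0)) :=
  stmt10_general m n hn LX LY hLXsymm hLXrow hLXoffdiag hLYsymm hLYrow u v huv
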